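/- arXiv:1312.3522 — 6 statements merged into one kernel-verified Lean document; each statement's English description precedes it below -/
import Mathlib

section
/- For any positive integer s, the sum over i from 0 to s of C(s,i)·|s−2i| equals 2·⌈s/2⌉·C(s,⌈s/2⌉). -/
/-!
Since `C(s,i) (s - i) = C(s,i+1) (i + 1)`, the signed sum `∑_{i<k} C(s,i) (s - 2i)` telescopes to
`k C(s,k)`; in particular it vanishes for `k = s + 1`. The terms are nonnegative exactly for
`i < m := ⌈s/2⌉`, so the sum of absolute values is twice the partial sum up to `m`, i.e. `2 m C(s,m)`.
-/

open Finset

theorem Nat.ceil_natCast_div_two {K : Type*} [Field K] [LinearOrder K] [IsStrictOrderedRing K]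
    [FloorSemiring K] (s : ℕ) : ⌈(s : K) / 2⌉₊ = (s + 1) / 2 := by
  apply le_antisymm
  · rw [Nat.ceil_le, div_le_iff₀ two_pos]
    exact_mod_cast (by omega : s ≤ (s + 1) / 2 * 2)
  · have h : (s : K) ≤ ⌈(s : K) / 2⌉₊ * 2 := (div_le_iff₀ two_pos).1 (Nat.le_ceil _)
    have h' : s ≤ ⌈(s : K) / 2⌉₊ * 2 := by exact_mod_cast h
    omega

theorem Finset.sum_range_abs_eq_two_nsmul_sum_sub {R : Type*} [AddCommGroup R] [LinearOrder R]
    [IsOrderedAddMonoid R] (f : ℕ → R) {m n : ℕ} (hmn : m ≤ n)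
    (hpos : ∀ i < m, 0 ≤ f i) (hneg : ∀ i, m ≤ i → i < n → f i ≤ 0) :
    ∑ i ∈ range n, |f i| = 2 • ∑ i ∈ range m, f i - ∑ i ∈ range n, f i := by
  have habs_pos : ∑ i ∈ range m, |f i| = ∑ i ∈ range m, f i :=
    sum_congr rfl fun i hi => abs_of_nonneg (hpos i (mem_range.1 hi))
  have habs_neg : ∑ i ∈ Ico m n, |f i| = -∑ i ∈ Ico m n, f i := by
    rw [← sum_neg_distrib]
    exact sum_congr rfl fun i hi =>
      abs_of_nonpos (hneg i (mem_Ico.1 hi).1 (mem_Ico.1 hi).2)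
  rw [← sum_range_add_sum_Ico _ hmn, ← sum_range_add_sum_Ico _ hmn, habs_pos, habs_neg, two_nsmul]
  abel

theorem Nat.sum_range_choose_mul_sub_two_mul (s k : ℕ) :
    ∑ i ∈ range k, (s.choose i : ℤ) * (s - 2 * i) = k * s.choose k := by
  induction k with
  | zero => simp
  | succ k ih =>
    have hstep : (s.choose (k + 1) * (k + 1) : ℤ) = s.choose k * (s - k) := by
      rcases le_or_gt k s with hk | hk
      · have h := congrArg (Nat.cast : ℕ → ℤ) (s.choose_succ_right_eq k)
        push_cast [hk] at h
        exact h
      · simp [Nat.choose_eq_zero_of_lt hk, Nat.choose_eq_zero_of_lt (hk.trans k.lt_succ_self)]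
    rw [sum_range_succ, ih]
    push_cast
    linear_combination -hstep

theorem Nat.sum_range_choose_mul_abs_sub_two_mul (s : ℕ) :
    ∑ i ∈ range (s + 1), (s.choose i : ℤ) * |(s : ℤ) - 2 * i|
      = 2 * ((s + 1) / 2 : ℕ) * s.choose ((s + 1) / 2) := by
  set m := (s + 1) / 2
  have hsplit := sum_range_abs_eq_two_nsmul_sum_sub (fun i => (s.choose i : ℤ) * (s - 2 * i))
    (m := m) (n := s + 1) (by omega)
    (fun i hi => mul_nonneg (by positivity) (by omega))
    (fun i hi _ => mul_nonpos_of_nonneg_of_nonpos (by positivity) (by omega))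
  simp only [abs_mul, Nat.abs_cast, sum_range_choose_mul_sub_two_mul,
    Nat.choose_succ_self, Nat.cast_zero, mul_zero, sub_zero, nsmul_eq_mul, Nat.cast_ofNat] at hsplit
  rw [hsplit, mul_assoc]

theorem stmt0_general (s : ℕ) :
    ∑ i ∈ Finset.range (s + 1), s.choose i * ((s : ℤ) - 2 * i).natAbs
      = 2 * ⌈(s : ℚ) / 2⌉₊ * s.choose ⌈(s : ℚ) / 2⌉₊ := by
  rw [Nat.ceil_natCast_div_two]
  zify
  exact Nat.sum_range_choose_mul_abs_sub_two_mul s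

theorem stmt0 (s : ℕ) (hs : 0 < s) :
    ∑ i ∈ Finset.range (s + 1), s.choose i * ((s : ℤ) - 2 * i).natAbs
      = 2 * ⌈(s : ℚ) / 2⌉₊ * s.choose ⌈(s : ℚ) / 2⌉₊ :=
  stmt0_general s
end

section
/- If s is an even positive integer, then the sum over i from 0 to s of C(s,i)·|s−2i| equals 2s·C(s−1, s/2 − 1). -/
lemma term_tele (n k : ℕ) :
    ((n+1).choose (k+1) : ℤ) * ((n:ℤ) + 1 - 2 * (k+1))
      = (n+1) * (n.choose (k+1)) - (n+1) * (n.choose k) := by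
  have h1 : ((n:ℤ)+1) * n.choose k = ((k:ℤ)+1) * (n+1).choose (k+1) := by
    have := Nat.add_one_mul_choose_eq n k
    have := congrArg (Nat.cast : ℕ → ℤ) this
    push_cast at this
    linarith
  have h2 : ((n+1).choose (k+1) : ℤ) = n.choose k + n.choose (k+1) := by
    have := Nat.choose_succ_succ' n k
    exact_mod_cast congrArg (Nat.cast : ℕ → ℤ) this
  nlinarith [h1, h2]

lemma half_sum (m : ℕ) (hm : 1 ≤ m) :
    ∑ i ∈ Finset.range m, ((2*m).choose i : ℤ) * (2*(m:ℤ) - 2*i)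
      = 2*m * ((2*m-1).choose (m-1)) := by
  obtain ⟨n, rfl⟩ : ∃ n, m = n + 1 := ⟨m - 1, (Nat.succ_pred_eq_of_pos hm).symm⟩
  set f : ℕ → ℤ := fun j => if j = 0 then 0 else 2*((n:ℤ)+1) * ((2*(n+1)-1).choose (j-1)) with hf
  have key : ∀ i ∈ Finset.range (n+1),
      ((2*(n+1)).choose i : ℤ) * (2*(((n:ℕ)+1:ℕ):ℤ) - 2*i) = f (i+1) - f i := by
    intro i _
    have h2m : 2*(n+1) = (2*n+1) + 1 := by ring
    have h2m' : 2*(n+1)-1 = 2*n+1 := by omega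
    cases i with
    | zero =>
      simp only [hf, h2m']
      norm_num
    | succ k =>
      simp only [hf, h2m', h2m, Nat.add_sub_cancel, if_neg (Nat.succ_ne_zero k)]
      have := term_tele (2*n+1) k
      push_cast at this ⊢
      linarith
  rw [Finset.sum_congr rfl key, Finset.sum_range_sub]
  simp only [hf, Nat.add_sub_cancel, if_neg (Nat.succ_ne_zero n), if_pos rfl]
  push_cast
  ring

theorem stmt1 (s : ℕ) (hs : 0 < s) (heven : Even s) :
    ∑ i ∈ Finset.range (s + 1), s.choose i * ((s : ℤ) - 2 * i).natAbs
      = 2 * s * (s - 1).choose (s / 2 - 1) := by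
  obtain ⟨m, rfl⟩ : ∃ m, s = 2 * m := by
    obtain ⟨k, hk⟩ := heven; exact ⟨k, by omega⟩
  have hm : 1 ≤ m := by omega
  have hdiv : 2 * m / 2 = m := by omega
  rw [hdiv]
  set t : ℕ → ℕ := fun i => (2*m).choose i * (((2*m : ℕ) : ℤ) - 2 * i).natAbs with ht
  show ∑ i ∈ Finset.range (2*m + 1), t i = 2 * (2*m) * (2*m - 1).choose (m - 1)
  have hsplit : ∑ i ∈ Finset.range (2*m+1), t i
      = ∑ i ∈ Finset.range (m+1), t i + ∑ i ∈ Finset.range m, t (m+1+i) := by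
    rw [show 2*m+1 = (m+1)+m by ring, Finset.sum_range_add]
  have hmid : t m = 0 := by
    have h0 : ((2*m : ℕ) : ℤ) - 2 * (m:ℤ) = 0 := by push_cast; ring
    simp [ht, h0]
  have hrefl : ∑ i ∈ Finset.range m, t (m+1+i) = ∑ i ∈ Finset.range m, t i := by
    rw [← Finset.sum_range_reflect (fun i => t (m+1+i)) m]
    apply Finset.sum_congr rfl
    intro i hi
    simp only [Finset.mem_range] at hi
    have h1 : m + 1 + (m - 1 - i) = 2*m - i := by omega
    rw [h1]
    simp only [ht]
    congr 1
    · rw [← Nat.choose_symm (by omega : i ≤ 2*m)]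
    · have hc : ((2*m - i : ℕ) : ℤ) = 2*(m:ℤ) - i := by
        rw [Nat.cast_sub (by omega : i ≤ 2*m)]; push_cast; ring
      rw [show (((2*m : ℕ) : ℤ) - 2*((2*m - i : ℕ) : ℤ)) = -(((2*m : ℕ) : ℤ) - 2*i) by
        rw [hc]; push_cast; ring]
      exact Int.natAbs_neg _
  rw [hsplit, Finset.sum_range_succ, hmid, hrefl]
  have hnat : ∑ i ∈ Finset.range m, t i = 2 * m * ((2*m - 1).choose (m - 1)) := by
    have hcast : ((∑ i ∈ Finset.range m, t i : ℕ) : ℤ)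
        = ∑ i ∈ Finset.range m, ((2*m).choose i : ℤ) * (2*(m:ℤ) - 2*i) := by
      simp only [ht]
      push_cast
      apply Finset.sum_congr rfl
      intro i hi
      simp only [Finset.mem_range] at hi
      congr 1
      rw [abs_of_nonneg (by omega : (0:ℤ) ≤ 2*(m:ℤ) - 2*i)]
    have h2 : ((∑ i ∈ Finset.range m, t i : ℕ) : ℤ) = 2*m * ((2*m-1).choose (m-1)) := by
      rw [hcast, half_sum m hm]
    exact_mod_cast h2
  rw [hnat]
  ring
end

section
/- If s is an odd positive integer, then the sum over i from 0 to s of C(s,i)·|s−2i| equals 2s·C(s−1, (s−1)/2). -/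
/-!
Writing `F k = k * C(n, k)`, each term `C(n, k) * (n - 2k)` equals `F (k+1) - F k`. The terms are
nonnegative up to `k = n / 2` and nonpositive afterwards, so the sum of their absolute values
telescopes on both halves to `2 F (n / 2 + 1)`; for `n = 2m + 1` this is `2 (2m+1) C(2m, m)`.
-/

open Finset

namespace Nat

theorem choose_mul_sub_two_mul (n k : ℕ) :
    (n.choose k : ℤ) * (n - 2 * k) = (k + 1) * n.choose (k + 1) - k * n.choose k := by
  rcases le_or_gt k n with hkn | hnk
  · have h := choose_succ_right_eq n k
    zify [hkn] at h
    linear_combination -h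
  · simp [choose_eq_zero_of_lt hnk, choose_eq_zero_of_lt (Nat.lt_succ_of_lt hnk)]

theorem sum_range_choose_mul_natAbs_sub_two_mul (n : ℕ) :
    ∑ i ∈ range (n + 1), n.choose i * ((n : ℤ) - 2 * i).natAbs
      = 2 * (n / 2 + 1) * n.choose (n / 2 + 1) := by
  set F : ℕ → ℤ := fun k ↦ k * n.choose k
  have hterm (k : ℕ) : (n.choose k : ℤ) * (n - 2 * k) = F (k + 1) - F k := by
    simp only [F, choose_mul_sub_two_mul]
    push_cast
    ring
  have hmid : n / 2 + 1 ≤ n + 1 := by omega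
  have hlow : ∑ i ∈ range (n / 2 + 1), (n.choose i : ℤ) * |(n : ℤ) - 2 * i|
      = F (n / 2 + 1) - F 0 := by
    rw [← sum_range_sub]
    refine sum_congr rfl fun i hi ↦ ?_
    rw [← hterm, abs_of_nonneg]
    have : 2 * i ≤ n := by grind
    omega
  have hhigh : ∑ i ∈ Ico (n / 2 + 1) (n + 1), (n.choose i : ℤ) * |(n : ℤ) - 2 * i|
      = -(F (n + 1) - F (n / 2 + 1)) := by
    rw [← sum_Ico_sub F hmid, ← sum_neg_distrib]
    refine sum_congr rfl fun i hi ↦ ?_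
    rw [← hterm, abs_of_nonpos, mul_neg]
    have : n < 2 * i := by grind
    omega
  have hF0 : F 0 = 0 := by simp [F]
  have hFtop : F (n + 1) = 0 := by simp [F]
  zify
  rw [← sum_range_add_sum_Ico _ hmid, hlow, hhigh, hF0, hFtop]
  simp only [F]
  push_cast
  ring

end Nat

theorem stmt2_general (s : ℕ) (hodd : Odd s) :
    ∑ i ∈ Finset.range (s + 1), s.choose i * ((s : ℤ) - 2 * i).natAbs
      = 2 * s * (s - 1).choose ((s - 1) / 2) := by
  obtain ⟨m, rfl⟩ := hodd
  have hhalf : (2 * m + 1) / 2 = m := by omega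
  rw [Nat.sum_range_choose_mul_natAbs_sub_two_mul, hhalf, Nat.add_sub_cancel, mul_assoc,
    mul_comm (m + 1), ← Nat.add_one_mul_choose_eq, Nat.mul_div_cancel_left m two_pos]
  ring

theorem stmt2 (s : ℕ) (hs : 0 < s) (hodd : Odd s) :
    ∑ i ∈ Finset.range (s + 1), s.choose i * ((s : ℤ) - 2 * i).natAbs
      = 2 * s * (s - 1).choose ((s - 1) / 2) :=
  stmt2_general s hodd
end

section
/- Define g(s) = (2/2^s)·⌈s/2⌉·C(s,⌈s/2⌉)/√s for positive integers s. Then g(1) = 1 and g(s) < 1 for all integers s > 1. -/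
lemma cb_sq_le : ∀ m : ℕ, ((2*m).choose m)^2 * (3*m+1) ≤ 16^m := by
  intro m
  induction m with
  | zero => simp
  | succ k ih =>
    have hid' : (k+1) * ((2*(k+1)).choose (k+1)) = 2 * (2*k+1) * ((2*k).choose k) :=
      Nat.succ_mul_centralBinom_succ k
    have hpos : 0 < (k+1)^2 := by positivity
    apply Nat.le_of_mul_le_mul_left _ hpos
    have hsq : ((k+1) * ((2*(k+1)).choose (k+1)))^2 = (2 * (2*k+1) * ((2*k).choose k))^2 := by
      rw [hid']
    have h1 : (k+1)^2 * (((2*(k+1)).choose (k+1))^2 * (3*(k+1)+1))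
        = (2*(2*k+1))^2 * ((2*k).choose k)^2 * (3*k+4) := by
      rw [mul_pow, mul_pow] at hsq
      calc (k+1)^2 * (((2*(k+1)).choose (k+1))^2 * (3*(k+1)+1))
          = (k+1)^2 * ((2*(k+1)).choose (k+1))^2 * (3*k+4) := by ring
        _ = (2*(2*k+1))^2 * ((2*k).choose k)^2 * (3*k+4) := by rw [hsq]
    rw [h1]
    have h2 : (2*(2*k+1))^2 * (3*k+4) ≤ 16 * ((k+1)^2 * (3*k+1)) := by nlinarith
    calc (2*(2*k+1))^2 * ((2*k).choose k)^2 * (3*k+4)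
        = (2*(2*k+1))^2 * (3*k+4) * ((2*k).choose k)^2 := by ring
      _ ≤ 16 * ((k+1)^2 * (3*k+1)) * ((2*k).choose k)^2 := Nat.mul_le_mul_right _ h2
      _ = (k+1)^2 * (16 * (((2*k).choose k)^2 * (3*k+1))) := by ring
      _ ≤ (k+1)^2 * (16 * 16^k) := Nat.mul_le_mul_left _ (Nat.mul_le_mul_left _ ih)
      _ = (k+1)^2 * 16^(k+1) := by ring

lemma key (m : ℕ) (hm : 1 ≤ m) :
    ((2*m+1 : ℕ) : ℝ) * ((2*m).choose m : ℝ) < 4^m * Real.sqrt (2*m+1) := by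
  have hCpos : (0:ℝ) < ((2*m).choose m : ℝ) := by
    exact_mod_cast Nat.choose_pos (show m ≤ 2*m by omega)
  have hcast : ((2*m).choose m : ℝ)^2 * (3*(m:ℝ)+1) ≤ 16^m := by
    have := cb_sq_le m; exact_mod_cast this
  have hs : (0:ℝ) < 2*(m:ℝ)+1 := by positivity
  have hsqrt : Real.sqrt (2*m+1) * Real.sqrt (2*m+1) = (2*(m:ℝ)+1) :=
    Real.mul_self_sqrt (le_of_lt hs)
  have hlt : Real.sqrt (2*m+1) * ((2*m).choose m : ℝ) < 4^m := by
    have hsq : (Real.sqrt (2*m+1) * ((2*m).choose m : ℝ))^2 < ((4:ℝ)^m)^2 := by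
      have he : (Real.sqrt (2*m+1) * ((2*m).choose m : ℝ))^2
          = (2*(m:ℝ)+1) * ((2*m).choose m : ℝ)^2 := by
        rw [mul_pow, sq (Real.sqrt _), hsqrt]
      have h16 : ((4:ℝ)^m)^2 = 16^m := by
        rw [← pow_mul, pow_mul']; norm_num
      rw [he, h16]
      have hmpos : (0:ℝ) < m := by exact_mod_cast hm
      nlinarith [mul_pos hmpos (pow_pos hCpos 2)]
    exact lt_of_pow_lt_pow_left₀ 2 (by positivity) hsq
  have hrw : ((2*m+1 : ℕ) : ℝ) = Real.sqrt (2*m+1) * Real.sqrt (2*m+1) := by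
    push_cast; rw [hsqrt]
  rw [hrw]
  calc Real.sqrt (2*m+1) * Real.sqrt (2*m+1) * ((2*m).choose m : ℝ)
      = Real.sqrt (2*m+1) * (Real.sqrt (2*m+1) * ((2*m).choose m : ℝ)) := by ring
    _ < Real.sqrt (2*m+1) * 4^m :=
        mul_lt_mul_of_pos_left hlt (Real.sqrt_pos.mpr hs)
    _ = 4^m * Real.sqrt (2*m+1) := by ring


theorem stmt4 (g : ℕ → ℝ)
    (hg : ∀ s : ℕ, 0 < s →
      g s = 2 / 2 ^ s * ⌈(s : ℝ) / 2⌉₊ * s.choose ⌈(s : ℝ) / 2⌉₊ / Real.sqrt s) :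
    g 1 = 1 ∧ ∀ s : ℕ, 1 < s → g s < 1 := by
  have ceil_odd : ∀ m : ℕ, ⌈((2*m+1 : ℕ) : ℝ) / 2⌉₊ = m + 1 := by
    intro m
    rw [Nat.ceil_eq_iff (by omega)]
    push_cast
    constructor <;> nlinarith
  have ceil_even : ∀ m : ℕ, ⌈((2*m : ℕ) : ℝ) / 2⌉₊ = m := by
    intro m
    have h : ((2*m : ℕ) : ℝ) / 2 = (m : ℝ) := by push_cast; ring
    rw [h, Nat.ceil_natCast]
  have sqrt_cast : ∀ n : ℕ, Real.sqrt ((2*n+1 : ℕ) : ℝ) = Real.sqrt (2*(n:ℝ)+1) := by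
    intro n; push_cast; ring_nf
  constructor
  · have h1 := hg 1 one_pos
    have hc : ⌈((1:ℕ) : ℝ) / 2⌉₊ = 1 := by
      have := ceil_odd 0; norm_num at this ⊢
    rw [hc] at h1
    norm_num at h1
    exact h1
  · intro s hs
    rcases Nat.even_or_odd s with ⟨m, hm⟩ | ⟨m, hm⟩
    · -- s = m + m
      have hm1 : 1 ≤ m := by omega
      have hsm : s = 2*m := by omega
      subst hsm
      have hgs := hg (2*m) (by omega)
      rw [ceil_even m] at hgs
      rcases Nat.lt_or_ge m 2 with h2 | h2
      · -- m = 1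
        have hm' : m = 1 := by omega
        subst hm'
        rw [hgs]
        have hs2 : (1:ℝ) < Real.sqrt 2 := by
          rw [show (1:ℝ) = Real.sqrt 1 by simp]
          exact Real.sqrt_lt_sqrt (by norm_num) (by norm_num)
        norm_num
        exact inv_lt_one_of_one_lt₀ hs2
      · obtain ⟨k, hk⟩ : ∃ k, m = k + 1 := ⟨m - 1, by omega⟩
        have hk1 : 1 ≤ k := by omega
        subst hk
        have hid : ((k+1 : ℕ):ℝ) * ((2*(k+1)).choose (k+1) : ℝ)
            = 2 * ((2*k+1 : ℕ):ℝ) * ((2*k).choose k : ℝ) := by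
          exact_mod_cast congrArg (Nat.cast (R := ℝ)) (Nat.succ_mul_centralBinom_succ k)
        have hkey := key k hk1
        have hsqpos : (0:ℝ) < Real.sqrt ((2*(k+1) : ℕ):ℝ) := by
          apply Real.sqrt_pos.mpr; positivity
        rw [hgs, div_lt_one hsqpos]
        have h2pow : (2:ℝ)^(2*(k+1)) = 4 * 4^k := by
          rw [pow_mul]; norm_num; ring
        have hexp : 2 / (2:ℝ)^(2*(k+1)) * ((k+1 : ℕ):ℝ) * ((2*(k+1)).choose (k+1) : ℝ)
            = ((2*k+1 : ℕ):ℝ) * ((2*k).choose k : ℝ) / 4^k := by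
          rw [mul_assoc, hid, h2pow]
          field_simp
          ring
        rw [hexp, div_lt_iff₀ (by positivity)]
        have hmono : Real.sqrt (2*(k:ℝ)+1) ≤ Real.sqrt ((2*(k+1) : ℕ):ℝ) := by
          apply Real.sqrt_le_sqrt; push_cast; linarith
        calc ((2*k+1 : ℕ):ℝ) * ((2*k).choose k : ℝ)
            < 4^k * Real.sqrt (2*(k:ℝ)+1) := hkey
          _ ≤ 4^k * Real.sqrt ((2*(k+1) : ℕ):ℝ) := by
              exact mul_le_mul_of_nonneg_left hmono (by positivity)
          _ = Real.sqrt ((2*(k+1) : ℕ):ℝ) * 4^k := by ring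
    · -- s = 2*m+1
      have hm1 : 1 ≤ m := by omega
      subst hm
      have hgs := hg (2*m+1) (by omega)
      rw [ceil_odd m] at hgs
      have hid : ((m+1 : ℕ):ℝ) * ((2*m+1).choose (m+1) : ℝ)
          = ((2*m+1 : ℕ):ℝ) * ((2*m).choose m : ℝ) := by
        have hidn : ((2*m+1).choose (m+1)) * (m+1) = (2*m+1) * ((2*m).choose m) :=
          (Nat.add_one_mul_choose_eq (2*m) m).symm
        rw [mul_comm]
        exact_mod_cast hidn
      have hkey := key m hm1
      have hsqpos : (0:ℝ) < Real.sqrt ((2*m+1 : ℕ):ℝ) := by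
        apply Real.sqrt_pos.mpr; positivity
      rw [hgs, div_lt_one hsqpos]
      have h2pow : (2:ℝ)^(2*m+1) = 2 * 4^m := by
        rw [pow_succ, pow_mul]; norm_num; ring
      have hexp : 2 / (2:ℝ)^(2*m+1) * ((m+1 : ℕ):ℝ) * ((2*m+1).choose (m+1) : ℝ)
          = ((2*m+1 : ℕ):ℝ) * ((2*m).choose m : ℝ) / 4^m := by
        rw [mul_assoc, hid, h2pow]
        field_simp
      rw [hexp, div_lt_iff₀ (by positivity)]
      calc ((2*m+1 : ℕ):ℝ) * ((2*m).choose m : ℝ)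
          < 4^m * Real.sqrt (2*(m:ℝ)+1) := hkey
        _ = Real.sqrt ((2*m+1 : ℕ):ℝ) * 4^m := by
            rw [sqrt_cast m]; ring
end

section
/- The sequence E(s) = (2/2^s)·⌈s/2⌉·C(s,⌈s/2⌉)/√s converges to √(2/π) as s → ∞. -/
/-!
The Wallis partial products satisfy `W n = 16 ^ n / (C(2n, n) ^ 2 * (2n + 1))` and tend to `π / 2`.
Hence `C(2n, n) / 4 ^ n * √(2n + 1) → √(2 / π)`, and this is exactly `E(2n + 1)`, while
`E(2n) = E(2n + 1) * √(2n / (2n + 1))`. No Stirling asymptotics are needed.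
-/

open Filter Topology Real Nat

theorem Filter.Tendsto.of_comp_two_mul_of_comp_two_mul_add_one {α : Type*} {f : ℕ → α}
    {l : Filter α} (heven : Tendsto (fun n => f (2 * n)) atTop l)
    (hodd : Tendsto (fun n => f (2 * n + 1)) atTop l) : Tendsto f atTop l := by
  refine fun s hs => mem_map.2 ?_
  obtain ⟨a, ha⟩ := eventually_atTop.1 (heven hs)
  obtain ⟨b, hb⟩ := eventually_atTop.1 (hodd hs)
  filter_upwards [eventually_ge_atTop (2 * a + 2 * b)] with n hn
  rcases n.even_or_odd' with ⟨k, rfl | rfl⟩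
  exacts [ha k (by omega), hb k (by omega)]

theorem Wallis.inv_W_eq_centralBinom_div_four_pow_sq_mul (n : ℕ) :
    (Wallis.W n)⁻¹ = ((centralBinom n : ℝ) / 4 ^ n) ^ 2 * (2 * n + 1) := by
  have hfac : ((2 * n)! : ℝ) = centralBinom n * n ! * n ! := by
    have := choose_mul_factorial_mul_factorial (Nat.le_mul_of_pos_left n two_pos)
    rw [show 2 * n - n = n by omega] at this
    exact_mod_cast this.symm
  have hpow : (2 : ℝ) ^ (4 * n) = (4 ^ n) ^ 2 := by
    rw [← pow_mul, show 4 * n = 2 * (n * 2) by ring, pow_mul]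
    norm_num
  rw [Wallis.W_eq_factorial_ratio, hfac, hpow]
  field_simp

theorem tendsto_centralBinom_div_four_pow_mul_sqrt :
    Tendsto (fun n : ℕ => (centralBinom n : ℝ) / 4 ^ n * √(2 * n + 1)) atTop (𝓝 √(2 / π)) := by
  have hW : Tendsto (fun n => (Wallis.W n)⁻¹) atTop (𝓝 (π / 2)⁻¹) :=
    Wallis.tendsto_W_nhds_pi_div_two.inv₀ (by positivity)
  rw [inv_div] at hW
  refine hW.sqrt.congr fun n => ?_
  rw [Wallis.inv_W_eq_centralBinom_div_four_pow_sq_mul, sqrt_mul' _ (by positivity),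
    sqrt_sq (by positivity)]

theorem tendsto_sqrt_two_mul_div_sqrt_two_mul_add_one :
    Tendsto (fun n : ℕ => √(2 * n) / √(2 * n + 1)) atTop (𝓝 1) := by
  have h := (Stirling.tendsto_self_div_two_mul_self_add_one.const_mul 2).sqrt
  rw [mul_one_div_cancel two_ne_zero, Real.sqrt_one] at h
  refine h.congr fun n => ?_
  rw [← sqrt_div' _ (by positivity), mul_div_assoc]

/-- The closed form of `E(s)`. -/
noncomputable def rademacherAbsMean (s : ℕ) : ℝ :=
  2 / 2 ^ s * ⌈(s : ℝ) / 2⌉₊ * s.choose ⌈(s : ℝ) / 2⌉₊ / √s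

theorem rademacherAbsMean_two_mul (n : ℕ) :
    rademacherAbsMean (2 * n) = centralBinom n / 4 ^ n * √(2 * n) := by
  have hceil : ⌈((2 * n : ℕ) : ℝ) / 2⌉₊ = n := by
    rw [cast_mul, cast_two, mul_div_cancel_left₀ _ two_ne_zero, ceil_natCast]
  have hpow : (2 : ℝ) ^ (2 * n) = 4 ^ n := by rw [pow_mul]; norm_num
  calc rademacherAbsMean (2 * n)
      = centralBinom n / 4 ^ n * (2 * n / √(2 * n)) := by
        rw [rademacherAbsMean, hceil, hpow, centralBinom]
        push_cast
        ring
    _ = centralBinom n / 4 ^ n * √(2 * n) := by rw [div_sqrt]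

theorem rademacherAbsMean_two_mul_add_one (n : ℕ) :
    rademacherAbsMean (2 * n + 1) = centralBinom n / 4 ^ n * √(2 * n + 1) := by
  have hceil : ⌈((2 * n + 1 : ℕ) : ℝ) / 2⌉₊ = n + 1 := by
    rw [ceil_eq_iff n.succ_ne_zero]
    push_cast
    constructor <;> linarith
  have hchoose : ((n + 1) * (2 * n + 1).choose (n + 1) : ℝ) = (2 * n + 1) * centralBinom n := by
    exact_mod_cast (mul_comm _ _).trans (add_one_mul_choose_eq (2 * n) n).symm
  have hpow : (2 : ℝ) ^ (2 * n + 1) = 2 * 4 ^ n := by rw [pow_succ, pow_mul]; norm_num; ring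
  calc rademacherAbsMean (2 * n + 1)
      = (n + 1) * (2 * n + 1).choose (n + 1) / 4 ^ n / √(2 * n + 1) := by
        rw [rademacherAbsMean, hceil, hpow]
        push_cast
        ring
    _ = centralBinom n / 4 ^ n * ((2 * n + 1) / √(2 * n + 1)) := by
        rw [hchoose]
        ring
    _ = centralBinom n / 4 ^ n * √(2 * n + 1) := by rw [div_sqrt]

theorem stmt7 :
    Filter.Tendsto
      (fun s : ℕ => 2 / 2 ^ s * ⌈(s : ℝ) / 2⌉₊ * s.choose ⌈(s : ℝ) / 2⌉₊ / Real.sqrt s)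
      Filter.atTop (nhds (Real.sqrt (2 / Real.pi))) := by
  have hodd : Tendsto (fun n => rademacherAbsMean (2 * n + 1)) atTop (𝓝 √(2 / π)) := by
    simpa only [rademacherAbsMean_two_mul_add_one] using tendsto_centralBinom_div_four_pow_mul_sqrt
  have heven : Tendsto (fun n => rademacherAbsMean (2 * n)) atTop (𝓝 √(2 / π)) := by
    have h := tendsto_centralBinom_div_four_pow_mul_sqrt.mul
      tendsto_sqrt_two_mul_div_sqrt_two_mul_add_one
    rw [mul_one] at h
    refine h.congr fun n => ?_
    rw [rademacherAbsMean_two_mul, mul_assoc, mul_div_cancel₀ _ (by positivity)]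
  exact heven.of_comp_two_mul_of_comp_two_mul_add_one hodd
end

section
/- The function s ↦ (s²/(s²−1))^{s/2}, defined for real s > 1, is strictly decreasing in s. -/
/-!
The function equals `exp (log (s² / (s² - 1)) * (s / 2))`, so it suffices that the exponent is
strictly decreasing. Its derivative is `log (s² / (s² - 1)) / 2 - 1 / (s² - 1)`, which is negative
because `log (1 + u) < u` with `u = 1 / (s² - 1)`.
-/

open Real Set

lemma Real.log_div_sub_one_lt {x : ℝ} (hx : 1 < x) : log (x / (x - 1)) < 1 / (x - 1) := by
  have hpos : 0 < x - 1 := sub_pos.mpr hx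
  have hgt : 1 < x / (x - 1) := (one_lt_div hpos).mpr (sub_one_lt x)
  calc log (x / (x - 1)) < x / (x - 1) - 1 := log_lt_sub_one_of_pos (by positivity) hgt.ne'
    _ = 1 / (x - 1) := by field_simp; ring

lemma hasDerivAt_log_sq_div_mul_half {s : ℝ} (hs : s ≠ 0) (hs1 : s ^ 2 - 1 ≠ 0) :
    HasDerivAt (fun t : ℝ => log (t ^ 2 / (t ^ 2 - 1)) * (t / 2))
      (log (s ^ 2 / (s ^ 2 - 1)) / 2 - 1 / (s ^ 2 - 1)) s := by
  have hsq : HasDerivAt (fun t : ℝ => t ^ 2) (2 * s) s := by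
    simpa using hasDerivAt_pow 2 s
  have hlog := (hsq.fun_div (hsq.sub_const 1) hs1).log (div_ne_zero (pow_ne_zero 2 hs) hs1)
  have hhalf : HasDerivAt (fun t : ℝ => t / 2) (1 / 2) s := (hasDerivAt_id s).div_const 2
  refine (hlog.mul hhalf).congr_deriv ?_
  field_simp
  ring

lemma strictAntiOn_log_sq_div_mul_half :
    StrictAntiOn (fun t : ℝ => log (t ^ 2 / (t ^ 2 - 1)) * (t / 2)) (Ioi 1) := by
  have hderiv : ∀ s ∈ Ioi (1 : ℝ), HasDerivAt (fun t : ℝ => log (t ^ 2 / (t ^ 2 - 1)) * (t / 2))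
      (log (s ^ 2 / (s ^ 2 - 1)) / 2 - 1 / (s ^ 2 - 1)) s := fun s hs =>
    hasDerivAt_log_sq_div_mul_half (zero_lt_one.trans hs).ne'
      (sub_pos.mpr (one_lt_pow₀ hs two_ne_zero)).ne'
  refine strictAntiOn_of_hasDerivWithinAt_neg (convex_Ioi 1)
    (f' := fun s => log (s ^ 2 / (s ^ 2 - 1)) / 2 - 1 / (s ^ 2 - 1))
    (fun s hs => (hderiv s hs).continuousAt.continuousWithinAt) ?_ ?_
  · rw [interior_Ioi]
    exact fun s hs => (hderiv s hs).hasDerivWithinAt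
  · rw [interior_Ioi]
    intro s hs
    have hsq : 1 < s ^ 2 := one_lt_pow₀ hs two_ne_zero
    have hlog := log_div_sub_one_lt hsq
    have hinv : 0 < 1 / (s ^ 2 - 1) := one_div_pos.mpr (sub_pos.mpr hsq)
    linarith

theorem stmt13 :
    StrictAntiOn (fun s : ℝ => (s ^ 2 / (s ^ 2 - 1)) ^ (s / 2)) (Set.Ioi (1 : ℝ)) := by
  refine (exp_strictMono.comp_strictAntiOn strictAntiOn_log_sq_div_mul_half).congr fun s hs => ?_
  have hsq : 1 < s ^ 2 := one_lt_pow₀ hs two_ne_zero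
  have hbase : 0 < s ^ 2 / (s ^ 2 - 1) := div_pos (by positivity) (sub_pos.mpr hsq)
  exact (rpow_def_of_pos hbase _).symm
end
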